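/- arXiv:math/0702592 — 3 statements merged into one kernel-verified Lean document; each statement's English description precedes it below -/
import Mathlib

section
/- Let M be a locally right Garside monoid and M₁ a closed submonoid (closed under left lcm and under left divisor). For each x ∈ M there exists a unique pair (x', x₁) with x = x'x₁, x₁ ∈ M₁, and no non-trivial element of M₁ right-divides x'; namely x₁ is the M₁-tail of x and x' = x·x₁⁻¹. -/
/-! By the chain condition, "proper left multiple" is well founded on the right divisors
of `x`, so some right divisor `t ∈ M₁` of `x` has no proper left multiple in `M₁` that still
divides `x`; comparing `t` with its left lcm with any other such divisor shows that `t` is the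
`M₁`-tail. If `x = x' t` and `a ∈ M₁` right-divides `x'`, then `a t ∈ M₁` right-divides `x`,
hence `t`, so `a` is left-invertible and therefore trivial. Any other decomposition
`x = q' q₁` has `q₁ ⪯ t`, and the quotient `t q₁⁻¹` lies in `M₁` and right-divides `q'`. -/

/-- `y` right-divides `x`, i.e. `x` is a left multiple of `y`. -/
def RDiv {M : Type*} [Monoid M] (x y : M) : Prop := ∃ z, x = z * y

/-- `z` is a left lcm of `a` and `b`: it is a common left multiple of `a` and `b`, and
every common left multiple of `a` and `b` is a left multiple of `z`. -/
def IsLeftLcm {M : Type*} [Monoid M] (z a b : M) : Prop :=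
  RDiv z a ∧ RDiv z b ∧ ∀ w, RDiv w a → RDiv w b → RDiv w z

/-- A monoid is locally right Garside if it is right cancellative, any two elements
admitting a common left multiple admit a left lcm, and, for every `x`, there is no
infinite strictly increasing chain of right divisors of `x`. -/
structure LocallyRightGarside (M : Type*) [Monoid M] : Prop where
  rightCancel : ∀ x y z : M, x * z = y * z → x = y
  lcm : ∀ a b : M, (∃ w, RDiv w a ∧ RDiv w b) → ∃ z, IsLeftLcm z a b
  noChain : ∀ x : M, ¬ ∃ f : ℕ → M,
      (∀ k, RDiv x (f k)) ∧ (∀ k, ∃ w, w ≠ 1 ∧ f (k + 1) = w * f k)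

/-- `t` is the `A`-tail of `x`: a right divisor of `x` lying in `A` which is maximal
with respect to right divisibility. -/
def IsTail {M : Type*} [Monoid M] (A : Set M) (x t : M) : Prop :=
  t ∈ A ∧ RDiv x t ∧ ∀ a ∈ A, RDiv x a → RDiv t a

/-- A submonoid is closed if it is closed under left lcm and under left divisor. -/
def ClosedSubmonoid {M : Type*} [Monoid M] (M₁ : Submonoid M) : Prop :=
  (∀ a ∈ M₁, ∀ b ∈ M₁, ∀ z : M, IsLeftLcm z a b → z ∈ M₁) ∧
  (∀ a ∈ M₁, ∀ y z : M, a = y * z → y ∈ M₁)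


namespace LocallyRightGarside

variable {M : Type*} [Monoid M]

theorem wellFounded_properLeftMultiple (h : LocallyRightGarside M) (x : M) :
    WellFounded fun z t : {t : M // RDiv x t} => ∃ w, w ≠ 1 ∧ z.1 = w * t.1 := by
  rw [wellFounded_iff_isEmpty_descending_chain]
  exact ⟨fun ⟨f, hf⟩ => h.noChain x ⟨fun k => (f k).1, fun k => (f k).2, hf⟩⟩

/-- A left-invertible element `a` would give the infinite chain `1, a, a², …` of right
divisors of `1`. -/
theorem eq_one_of_mul_eq_one (h : LocallyRightGarside M) {v a : M} (hva : v * a = 1) :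
    a = 1 := by
  by_contra ha
  have hpow : ∀ k : ℕ, v ^ k * a ^ k = 1 := fun k => by
    induction k with
    | zero => simp
    | succ n ih => rw [pow_succ, pow_succ', mul_assoc, ← mul_assoc v, hva, one_mul, ih]
  exact h.noChain 1 ⟨(a ^ ·), fun k => ⟨v ^ k, (hpow k).symm⟩, fun k => ⟨a, ha, pow_succ' a k⟩⟩

theorem exists_isTail (h : LocallyRightGarside M) {A : Set M} (hone : 1 ∈ A)
    (hlcm : ∀ a ∈ A, ∀ b ∈ A, ∀ z, IsLeftLcm z a b → z ∈ A) (x : M) : ∃ t, IsTail A x t := by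
  obtain ⟨⟨t, hxt⟩, htA, hmin⟩ := (h.wellFounded_properLeftMultiple x).has_min
    {t | t.1 ∈ A} ⟨⟨1, x, (mul_one x).symm⟩, hone⟩
  refine ⟨t, htA, hxt, fun a haA hxa => ?_⟩
  obtain ⟨z, ⟨w, hzt⟩, hza, hzmin⟩ := h.lcm t a ⟨x, hxt, hxa⟩
  have hzA : z ∈ A := hlcm t htA a haA z ⟨⟨w, hzt⟩, hza, hzmin⟩
  have hw : w = 1 := by
    by_contra hw
    exact hmin ⟨z, hzmin x hxt hxa⟩ hzA ⟨w, hw, hzt⟩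
  rw [hzt, hw, one_mul] at hza
  exact hza

theorem eq_one_of_rDiv_of_isTail (h : LocallyRightGarside M) {M₁ : Submonoid M} {x x' t : M}
    (hx : x = x' * t) (ht : IsTail (↑M₁) x t) {a : M} (ha : a ∈ M₁) (hx'a : RDiv x' a) :
    a = 1 := by
  obtain ⟨u, hu⟩ := hx'a
  obtain ⟨v, hv⟩ := ht.2.2 (a * t) (M₁.mul_mem ha ht.1) ⟨u, by rw [hx, hu, mul_assoc]⟩
  refine h.eq_one_of_mul_eq_one (v := v) (h.rightCancel _ _ t ?_)
  rw [mul_assoc, ← hv, one_mul]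

theorem eq_of_isTail (h : LocallyRightGarside M) {M₁ : Submonoid M} (hc : ClosedSubmonoid M₁)
    {x x' t q' q₁ : M} (hx : x = x' * t) (ht : IsTail (↑M₁) x t) (hq : x = q' * q₁)
    (hq₁ : q₁ ∈ M₁) (hq' : ∀ a ∈ M₁, RDiv q' a → a = 1) : q' = x' ∧ q₁ = t := by
  obtain ⟨v, hv⟩ := ht.2.2 q₁ hq₁ ⟨q', hq⟩
  have hq'v : q' = x' * v := h.rightCancel _ _ q₁ (by rw [← hq, hx, hv, mul_assoc])
  have hv1 : v = 1 := hq' v (hc.2 t ht.1 v q₁ hv) ⟨x', hq'v⟩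
  rw [hv1, mul_one] at hq'v
  rw [hv1, one_mul] at hv
  exact ⟨hq'v, hv.symm⟩

end LocallyRightGarside

/-- In a locally right Garside monoid with a closed submonoid `M₁`, every
`x` has a unique decomposition `x = x' * x₁` with `x₁ ∈ M₁` and no non-trivial element
of `M₁` right-dividing `x'`; moreover `x₁` is the `M₁`-tail of `x`. -/
theorem existsUnique_decomposition_closed_submonoid {M : Type*} [Monoid M]
    (h : LocallyRightGarside M) (M₁ : Submonoid M) (hc : ClosedSubmonoid M₁) (x : M) :
    ∃ p : M × M,
      ((x = p.1 * p.2 ∧ p.2 ∈ M₁ ∧ ∀ a ∈ M₁, RDiv p.1 a → a = 1) ∧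
        IsTail (↑M₁) x p.2) ∧
      ∀ q : M × M,
        (x = q.1 * q.2 ∧ q.2 ∈ M₁ ∧ ∀ a ∈ M₁, RDiv q.1 a → a = 1) → q = p := by
  obtain ⟨t, ht⟩ := h.exists_isTail M₁.one_mem hc.1 x
  obtain ⟨x', hx⟩ := ht.2.1
  refine ⟨(x', t), ⟨⟨hx, ht.1, fun a ha => h.eq_one_of_rDiv_of_isTail hx ht ha⟩, ht⟩, ?_⟩
  rintro ⟨q', q₁⟩ ⟨hq, hq₁, hq'⟩
  obtain ⟨rfl, rfl⟩ := h.eq_of_isTail hc hx ht hq hq₁ hq'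
  rfl
end

section
/- In the positive braid monoid B_n⁺, for all n ≥ 2 and d ≥ 1, Δ_n^d = \widehat{Δ}_{n,d} · Δ_{n-1}^d, where \widehat{Δ}_{n,d} = Φ_n^{d+1}(δ_n)···Φ_n²(δ_n)·Φ_n(δ_n) with δ_n = σ_{n-1}···σ₁. -/
/-!
Conjugation by the Garside element is the flip: `Δ_n x = Φ_n(x) Δ_n`. On generators this is
`σ_i Δ_m = Δ_m σ_{m-i}`, proved by induction on `m` from the two factorisations
`Δ_{m+1} = σ_1 ⋯ σ_m Δ_m = Δ_m σ_m ⋯ σ_1`. Moreover `Φ_n(δ_n) = σ_1 ⋯ σ_{n-1}`, so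
`Δ_n = Φ_n(δ_n) Δ_{n-1}`, and induction on `d` gives
`Δ_n^{d+1} = Δ_n \widehat{Δ}_{n,d} Δ_{n-1}^d = Φ_n(\widehat{Δ}_{n,d}) Φ_n(δ_n) Δ_{n-1}^{d+1}`,
whose first two factors make up `\widehat{Δ}_{n,d+1}`.
-/

/-- The braid relations on the free monoid over `Fin N`
(generator `i : Fin N` stands for `σ_{i+1}`). -/
def braidRel (N : ℕ) : FreeMonoid (Fin N) → FreeMonoid (Fin N) → Prop := fun a b =>
  (∃ i j : Fin N, ((i : ℕ) + 2 ≤ (j : ℕ) ∨ (j : ℕ) + 2 ≤ (i : ℕ)) ∧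
      a = FreeMonoid.of i * FreeMonoid.of j ∧ b = FreeMonoid.of j * FreeMonoid.of i) ∨
  (∃ i j : Fin N, ((i : ℕ) + 1 = (j : ℕ) ∨ (j : ℕ) + 1 = (i : ℕ)) ∧
      a = FreeMonoid.of i * FreeMonoid.of j * FreeMonoid.of i ∧
      b = FreeMonoid.of j * FreeMonoid.of i * FreeMonoid.of j)

def braidCon (N : ℕ) : Con (FreeMonoid (Fin N)) := conGen (braidRel N)

/-- The positive braid monoid on `N+1` strands `B_{N+1}⁺`,
with generators `σ_1, …, σ_N` indexed by `Fin N`. -/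
abbrev PosBraid (N : ℕ) := (braidCon N).Quotient

/-- The generator `σ_{i+1}` of the positive braid monoid. -/
def sigma {N : ℕ} (i : Fin N) : PosBraid N := (braidCon N).mk' (FreeMonoid.of i)

/-- The flip automorphism `Φ_{N+1} : σ_i ↦ σ_{N+1-i}`. -/
def flipH (N : ℕ) : PosBraid N →* PosBraid N :=
  Con.lift _ ((braidCon N).mk'.comp (FreeMonoid.map Fin.rev)) <| by
    apply Con.conGen_le.mpr
    rintro a b (⟨i, j, hij, rfl, rfl⟩ | ⟨i, j, hij, rfl, rfl⟩) <;>
      simp only [Con.ker_rel, MonoidHom.comp_apply, map_mul, FreeMonoid.map_of] <;>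
      refine (Con.eq _).mpr (ConGen.Rel.of _ _ ?_)
    · exact Or.inl ⟨Fin.rev i, Fin.rev j, by
        simp only [Fin.val_rev]; omega, rfl, rfl⟩
    · exact Or.inr ⟨Fin.rev i, Fin.rev j, by
        simp only [Fin.val_rev]; omega, rfl, rfl⟩

/-- The inclusion `B_{N+1}⁺ → B_{N+2}⁺`. -/
def incl (N : ℕ) : PosBraid N →* PosBraid (N + 1) :=
  Con.lift _ ((braidCon (N + 1)).mk'.comp (FreeMonoid.map Fin.castSucc)) <| by
    apply Con.conGen_le.mpr
    rintro a b (⟨i, j, hij, rfl, rfl⟩ | ⟨i, j, hij, rfl, rfl⟩) <;>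
      simp only [Con.ker_rel, MonoidHom.comp_apply, map_mul, FreeMonoid.map_of] <;>
      refine (Con.eq _).mpr (ConGen.Rel.of _ _ ?_)
    · exact Or.inl ⟨i.castSucc, j.castSucc, by simpa using hij, rfl, rfl⟩
    · exact Or.inr ⟨i.castSucc, j.castSucc, by simpa using hij, rfl, rfl⟩

/-- Product `f^{p-1}(x_p) ⋯ f(x_2) · x_1` of the list `[x_p, …, x_1]`,
where each entry is twisted by an iterate of `f`. -/
def prodFlip {M : Type*} [Monoid M] (f : M → M) : List M → M
  | [] => 1
  | a :: t => f^[t.length] a * prodFlip f t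

/-- `l = [x_p, …, x_1]` (a list of elements of `B_{k+1}⁺`) is the `(k+2)`-splitting of
`x ∈ B_{k+2}⁺` : `x = Φ^{p-1}(x_p) ⋯ Φ(x_2)·x_1`, the leading entry is non-trivial, and
for every `r ≥ 2` the only generator `σ_i` right-dividing `Φ^{p-r}(x_p) ⋯ Φ(x_{r+1})·x_r`
is `σ_1`. -/
def IsSplit {k : ℕ} (x : PosBraid (k + 1)) (l : List (PosBraid k)) : Prop :=
  x = prodFlip (⇑(flipH (k + 1))) (l.map (incl k)) ∧
  l.head? ≠ some 1 ∧
  ∀ j, 1 ≤ j → j < l.length →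
    (∃ z, prodFlip (⇑(flipH (k + 1))) ((l.take j).map (incl k)) =
        z * sigma (⟨0, Nat.succ_pos k⟩ : Fin (k + 1))) ∧
    ∀ i : Fin (k + 1),
      (∃ z, prodFlip (⇑(flipH (k + 1))) ((l.take j).map (incl k)) = z * sigma i) →
      i = (⟨0, Nat.succ_pos k⟩ : Fin (k + 1))

/-- `σ_{i+1}` as an element of `B_{N+1}⁺`, extended by `1` for out-of-range indices. -/
def sigmaP (N : ℕ) (i : ℕ) : PosBraid N := if h : i < N then sigma ⟨i, h⟩ else 1

/-- `δ_{N+1} = σ_N σ_{N-1} ⋯ σ_1` in `B_{N+1}⁺`. -/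
def deltaFull (N : ℕ) : PosBraid N := ((List.ofFn (sigma (N := N))).reverse).prod

/-- `Δ_m` (the Garside element of `B_m⁺`), viewed inside `B_{N+1}⁺`,
via `Δ_1 = 1` and `Δ_{m+1} = σ_1 ⋯ σ_m · Δ_m`. -/
def DeltaP (N : ℕ) : ℕ → PosBraid N
  | 0 => 1
  | m + 1 => ((List.range m).map (sigmaP N)).prod * DeltaP N m

/-- `\widehatΔ_{N+1,d} = Φ^d(δ_{N+1}) ⋯ Φ²(δ_{N+1}) · Φ(δ_{N+1})` (`d` factors). -/
def hatDelta (N : ℕ) (d : ℕ) : PosBraid N :=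
  ((List.range d).map (fun j => (⇑(flipH N))^[d - j] (deltaFull N))).prod

/-- ShortLex extension of a relation: compare lists first by length,
then lexicographically (from the left). -/
def SL {α : Type*} (r : α → α → Prop) (s t : List α) : Prop :=
  s.length < t.length ∨ (s.length = t.length ∧ List.Lex r s t)

/-- The ordering `<⁺` of `B_{k+1}⁺`, defined recursively: on `B_2⁺` it is the comparison
of exponents of `σ_1`; on `B_{k+2}⁺` it is the ShortLex comparison of `(k+2)`-splittings,
entries being compared by `<⁺` on `B_{k+1}⁺`. -/
def ordP : (k : ℕ) → PosBraid k → PosBraid k → Prop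
  | 0 => fun _ _ => False
  | 1 => fun x y => ∃ p q : ℕ, x = sigma (0 : Fin 1) ^ p ∧ y = sigma (0 : Fin 1) ^ q ∧ p < q
  | (k + 2) => fun x y => ∃ lx ly : List (PosBraid (k + 1)),
      IsSplit x lx ∧ IsSplit y ly ∧ SL (ordP (k + 1)) lx ly

namespace PosBraid

variable {N : ℕ}

theorem induction_on {P : PosBraid N → Prop} (x : PosBraid N) (one : P 1)
    (gen : ∀ i, P (sigma i)) (mul : ∀ x y, P x → P y → P (x * y)) : P x := by
  obtain ⟨w, rfl⟩ := Con.mk'_surjective x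
  induction w using FreeMonoid.inductionOn with
  | one => exact one
  | of i => exact gen i
  | mul a b ha hb => rw [map_mul]; exact mul _ _ ha hb

theorem sigma_eq_sigmaP (i : Fin N) : sigma i = sigmaP N i := by
  simp [sigmaP]

theorem commute_sigmaP {a b : ℕ} (h : a + 2 ≤ b) : Commute (sigmaP N b) (sigmaP N a) := by
  unfold sigmaP
  by_cases hb : b < N
  · rw [dif_pos hb, dif_pos (by omega)]
    exact (Con.eq _).mpr (ConGen.Rel.of _ _ (Or.inl ⟨_, _, Or.inr h, rfl, rfl⟩))
  · rw [dif_neg hb]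
    exact Commute.one_left _

theorem sigmaP_braid {a : ℕ} (h : a + 1 < N) :
    sigmaP N a * sigmaP N (a + 1) * sigmaP N a
      = sigmaP N (a + 1) * sigmaP N a * sigmaP N (a + 1) := by
  rw [sigmaP, sigmaP, dif_pos (by omega), dif_pos h]
  exact (Con.eq _).mpr (ConGen.Rel.of _ _ (Or.inr ⟨_, _, Or.inl rfl, rfl, rfl⟩))

theorem commute_sigmaP_list_prod {j : ℕ} {l : List ℕ} (h : ∀ a ∈ l, a + 2 ≤ j) :
    Commute (sigmaP N j) (l.map (sigmaP N)).prod :=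
  Commute.list_prod_right _ _ fun _ hx ↦ by
    obtain ⟨a, ha, rfl⟩ := List.mem_map.mp hx
    exact commute_sigmaP (h a ha)

def sigmaAsc (N m : ℕ) : PosBraid N := ((List.range m).map (sigmaP N)).prod

def sigmaDesc (N m : ℕ) : PosBraid N := ((List.range m).map (sigmaP N)).reverse.prod

theorem sigmaAsc_succ (m : ℕ) : sigmaAsc N (m + 1) = sigmaAsc N m * sigmaP N m := by
  simp [sigmaAsc, List.range_succ]

theorem sigmaDesc_succ (m : ℕ) : sigmaDesc N (m + 1) = sigmaP N m * sigmaDesc N m := by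
  simp [sigmaDesc, List.range_succ]

theorem commute_sigmaAsc {j m : ℕ} (h : m + 1 ≤ j) : Commute (sigmaP N j) (sigmaAsc N m) :=
  commute_sigmaP_list_prod fun a ha ↦ by rw [List.mem_range] at ha; omega

theorem commute_sigmaDesc {j m : ℕ} (h : m + 1 ≤ j) : Commute (sigmaP N j) (sigmaDesc N m) := by
  rw [sigmaDesc, ← List.map_reverse]
  exact commute_sigmaP_list_prod fun a ha ↦ by rw [List.mem_reverse, List.mem_range] at ha; omega

theorem sigmaP_succ_mul_sigmaAsc {i m : ℕ} (him : i + 2 ≤ m) (hm : m ≤ N) :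
    sigmaP N (i + 1) * sigmaAsc N m = sigmaAsc N m * sigmaP N i := by
  induction m, him using Nat.le_induction with
  | base =>
    rw [sigmaAsc_succ, sigmaAsc_succ, ← mul_assoc, ← mul_assoc,
      (commute_sigmaAsc le_rfl).eq, mul_assoc, mul_assoc, mul_assoc, mul_assoc,
      ← mul_assoc (sigmaP N i), sigmaP_braid (by omega), mul_assoc]
  | succ m him ih =>
    rw [sigmaAsc_succ, ← mul_assoc, ih (by omega), mul_assoc, mul_assoc,
      (commute_sigmaP him).eq]

theorem sigmaP_mul_sigmaDesc {i m : ℕ} (him : i + 2 ≤ m) (hm : m ≤ N) :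
    sigmaP N i * sigmaDesc N m = sigmaDesc N m * sigmaP N (i + 1) := by
  induction m, him using Nat.le_induction with
  | base =>
    rw [sigmaDesc_succ, sigmaDesc_succ, ← mul_assoc, ← mul_assoc, sigmaP_braid (by omega),
      mul_assoc _ (sigmaP N (i + 1)), mul_assoc, (commute_sigmaDesc le_rfl).eq, mul_assoc,
      mul_assoc]
  | succ m him ih =>
    rw [sigmaDesc_succ, ← mul_assoc, ← (commute_sigmaP him).eq, mul_assoc, ih (by omega),
      mul_assoc]

theorem DeltaP_succ (m : ℕ) : DeltaP N (m + 1) = sigmaAsc N m * DeltaP N m := rfl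

theorem commute_DeltaP {j m : ℕ} (h : m ≤ j) : Commute (sigmaP N j) (DeltaP N m) := by
  induction m with
  | zero => exact Commute.one_right _
  | succ m ih => exact (commute_sigmaAsc h).mul_right (ih (by omega))

theorem DeltaP_succ_eq_mul_sigmaDesc (m : ℕ) : DeltaP N (m + 1) = DeltaP N m * sigmaDesc N m := by
  induction m with
  | zero => rfl
  | succ m ih =>
    calc DeltaP N (m + 2) = sigmaAsc N m * sigmaP N m * (DeltaP N m * sigmaDesc N m) := by
          rw [DeltaP_succ, sigmaAsc_succ, ih]
      _ = sigmaAsc N m * DeltaP N m * (sigmaP N m * sigmaDesc N m) := by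
          rw [mul_assoc, ← mul_assoc (sigmaP N m), (commute_DeltaP le_rfl).eq, mul_assoc,
            mul_assoc]
      _ = DeltaP N (m + 1) * sigmaDesc N (m + 1) := by rw [← DeltaP_succ, ← sigmaDesc_succ]

theorem sigmaP_zero_mul_DeltaP {j : ℕ} (h : j + 1 ≤ N) :
    sigmaP N 0 * DeltaP N (j + 2) = DeltaP N (j + 2) * sigmaP N j := by
  induction j with
  | zero => simp [DeltaP]
  | succ j ih =>
    rw [DeltaP_succ_eq_mul_sigmaDesc, ← mul_assoc, ih (by omega), mul_assoc,
      sigmaP_mul_sigmaDesc le_rfl (by omega), mul_assoc]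

theorem sigmaP_mul_DeltaP {i j : ℕ} (h : i + j + 1 ≤ N) :
    sigmaP N i * DeltaP N (i + j + 2) = DeltaP N (i + j + 2) * sigmaP N j := by
  induction i with
  | zero => simpa only [zero_add] using sigmaP_zero_mul_DeltaP (by omega)
  | succ i ih =>
    rw [show i + 1 + j + 2 = i + j + 2 + 1 by omega, DeltaP_succ, ← mul_assoc,
      sigmaP_succ_mul_sigmaAsc (by omega) (by omega), mul_assoc, ih (by omega), mul_assoc]

theorem flipH_sigma (i : Fin N) : flipH N (sigma i) = sigma i.rev := rfl

theorem flipH_flipH (x : PosBraid N) : flipH N (flipH N x) = x := by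
  induction x using induction_on with
  | one => simp
  | gen i => rw [flipH_sigma, flipH_sigma, Fin.rev_rev]
  | mul x y hx hy => rw [map_mul, map_mul, hx, hy]

theorem DeltaP_mul_flipH (x : PosBraid N) :
    DeltaP N (N + 1) * flipH N x = x * DeltaP N (N + 1) := by
  induction x using induction_on with
  | one => simp
  | gen i =>
    have hi : (i : ℕ) + i.rev + 2 = N + 1 := by rw [Fin.val_rev]; omega
    rw [flipH_sigma, sigma_eq_sigmaP, sigma_eq_sigmaP, ← hi, sigmaP_mul_DeltaP (by omega)]
  | mul x y hx hy => rw [map_mul, ← mul_assoc, hx, mul_assoc, hy, mul_assoc]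

theorem DeltaP_mul (x : PosBraid N) : DeltaP N (N + 1) * x = flipH N x * DeltaP N (N + 1) := by
  simpa only [flipH_flipH] using DeltaP_mul_flipH (flipH N x)

theorem map_sigmaP_range : (List.range N).map (sigmaP N) = List.ofFn sigma :=
  List.ext_getElem (by simp) fun n _ h ↦ by simp [sigma_eq_sigmaP]

theorem flipH_deltaFull : flipH N (deltaFull N) = sigmaAsc N N := by
  rw [deltaFull, sigmaAsc, map_sigmaP_range, map_list_prod, List.map_reverse, List.map_ofFn,
    List.ofFn_eq_map, List.ofFn_eq_map, ← List.map_reverse, List.finRange_reverse, List.map_map]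
  congr 2
  funext i
  simp [flipH_sigma]

theorem DeltaP_eq_flipH_deltaFull_mul : DeltaP N (N + 1) = flipH N (deltaFull N) * DeltaP N N := by
  rw [flipH_deltaFull, DeltaP_succ]

theorem hatDelta_succ (d : ℕ) :
    hatDelta N (d + 1) = flipH N (hatDelta N d) * flipH N (deltaFull N) := by
  rw [hatDelta, hatDelta, List.range_succ, List.map_append, List.prod_append, map_list_prod,
    List.map_map]
  congr 2
  · refine List.map_congr_left fun j hj ↦ ?_
    rw [Function.comp_apply, Nat.succ_sub (List.mem_range.mp hj).le,
      Function.iterate_succ_apply']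
  · simp

end PosBraid

theorem delta_pow_eq_hatDelta_mul_general (k d : ℕ) :
    (DeltaP (k + 1) (k + 2)) ^ d = hatDelta (k + 1) d * (DeltaP (k + 1) (k + 1)) ^ d := by
  induction d with
  | zero => simp [hatDelta]
  | succ d ih =>
    calc DeltaP (k + 1) (k + 2) ^ (d + 1)
        = DeltaP (k + 1) (k + 2) * hatDelta (k + 1) d * DeltaP (k + 1) (k + 1) ^ d := by
          rw [pow_succ', ih, mul_assoc]
      _ = flipH (k + 1) (hatDelta (k + 1) d) * DeltaP (k + 1) (k + 2)
            * DeltaP (k + 1) (k + 1) ^ d := by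
          rw [PosBraid.DeltaP_mul]
      _ = flipH (k + 1) (hatDelta (k + 1) d) * flipH (k + 1) (deltaFull (k + 1))
            * DeltaP (k + 1) (k + 1) ^ (d + 1) := by
          rw [PosBraid.DeltaP_eq_flipH_deltaFull_mul, pow_succ', mul_assoc, mul_assoc, mul_assoc]
      _ = hatDelta (k + 1) (d + 1) * DeltaP (k + 1) (k + 1) ^ (d + 1) := by
          rw [PosBraid.hatDelta_succ]

/-- in `B_n⁺` (`n = k+2 ≥ 2`), for every `d ≥ 1`,
`Δ_n^d = \widehatΔ_{n,d} · Δ_{n-1}^d`. -/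
theorem delta_pow_eq_hatDelta_mul (k d : ℕ) (hd : 1 ≤ d) :
    (DeltaP (k + 1) (k + 2)) ^ d = hatDelta (k + 1) d * (DeltaP (k + 1) (k + 1)) ^ d :=
  delta_pow_eq_hatDelta_mul_general k d
end

section
/- In the positive braid monoid B_n⁺ (n ≥ 2), if (x_p, ..., x₁) is the n-splitting of some positive braid, then x_p ≥⁺ σ₁, x_r ≥⁺ δ_{n-1}σ₁ for p > r ≥ 3, and x₂ ≥⁺ δ_{n-1} whenever p ≥ 3, where ≥⁺ is the recursive ShortLex braid ordering and δ_{n-1} = σ_{n-2}···σ₁. -/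
/-- `x ≥⁺ y` in `B_{k+1}⁺`. -/
def geP (k : ℕ) (x y : PosBraid k) : Prop := x = y ∨ ordP k y x

/-! ### Auxiliary development -/

section Aux

theorem mk_of_eq_sigma {N : ℕ} (i : Fin N) :
    ((braidCon N).mk' : FreeMonoid (Fin N) →* PosBraid N) (FreeMonoid.of i) = sigma i := rfl

/-- every element is a product of generators -/
theorem posbraid_repr {N : ℕ} (x : PosBraid N) :
    ∃ L : List (Fin N), x = (L.map sigma).prod := by
  induction x using Con.induction_on with
  | _ w =>
    induction w using FreeMonoid.recOn with
    | one => exact ⟨[], rfl⟩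
    | of_mul i w ih =>
      obtain ⟨L, hL⟩ := ih
      refine ⟨i :: L, ?_⟩
      show ((braidCon N).mk' : FreeMonoid (Fin N) →* PosBraid N) (FreeMonoid.of i * w) = _
      rw [map_mul, mk_of_eq_sigma]
      rw [show (braidCon N).mk' w = (w : PosBraid N) from rfl, hL]
      simp

/-- the length homomorphism -/
def lenH (N : ℕ) : PosBraid N →* Multiplicative ℕ :=
  Con.lift _ (FreeMonoid.lift fun _ => Multiplicative.ofAdd 1) <| by
    apply Con.conGen_le.mpr
    rintro a b (⟨i, j, hij, rfl, rfl⟩ | ⟨i, j, hij, rfl, rfl⟩) <;>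
      simp [Con.ker_rel, map_mul]

def len {N : ℕ} (x : PosBraid N) : ℕ := Multiplicative.toAdd (lenH N x)

@[simp] theorem len_one {N : ℕ} : len (1 : PosBraid N) = 0 := by
  simp only [len, map_one]; rfl

@[simp] theorem len_mul {N : ℕ} (x y : PosBraid N) : len (x * y) = len x + len y := by
  simp only [len, map_mul]; rfl

@[simp] theorem len_sigma {N : ℕ} (i : Fin N) : len (sigma i) = 1 := by
  have : lenH N (sigma i) = (FreeMonoid.lift fun _ : Fin N => Multiplicative.ofAdd 1)
      (.of i) := Con.lift_coe _ _
  simp only [len, this, FreeMonoid.lift_eval_of]; rfl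

theorem len_prod {N : ℕ} (L : List (Fin N)) : len ((L.map sigma).prod) = L.length := by
  induction L with
  | nil => simp
  | cons a t ih => simp [ih]; omega

theorem eq_one_of_len_eq_zero {N : ℕ} {x : PosBraid N} (h : len x = 0) : x = 1 := by
  obtain ⟨L, rfl⟩ := posbraid_repr x
  rw [len_prod] at h
  simp [List.length_eq_zero_iff.mp h]

theorem sigma_ne_one {N : ℕ} (i : Fin N) : sigma i ≠ 1 := fun h => by
  have := congrArg len h; simp at this

/-- last letter: any nontrivial element is right-divisible by a generator -/
theorem exists_last_letter {N : ℕ} {x : PosBraid N} (h : x ≠ 1) :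
    ∃ i z, x = z * sigma i := by
  obtain ⟨L, rfl⟩ := posbraid_repr x
  rcases eq_or_ne L [] with rfl | hL
  · simp at h
  · have hsplit := List.dropLast_append_getLast hL
    refine ⟨L.getLast hL, (L.dropLast.map sigma).prod, ?_⟩
    conv_lhs => rw [← hsplit]
    simp

end Aux

section Perm
open Equiv

theorem swap_comm' {α : Type*} [DecidableEq α] (a b c d : α) (h1 : a ≠ c) (h2 : a ≠ d)
    (h3 : b ≠ c) (h4 : b ≠ d) : swap a b * swap c d = swap c d * swap a b := by
  ext x
  simp only [Equiv.Perm.mul_apply, Equiv.swap_apply_def]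
  split_ifs <;> simp_all

theorem swap_braid' {α : Type*} [DecidableEq α] (a b c : α) (h1 : a ≠ b) (h2 : b ≠ c)
    (h3 : a ≠ c) : swap a b * swap b c * swap a b = swap b c * swap a b * swap b c := by
  have L : swap b a * swap c b * swap b a = swap a c :=
    Equiv.swap_mul_swap_mul_swap h2.symm h3.symm
  have R : swap b c * swap a b * swap b c = swap c a :=
    Equiv.swap_mul_swap_mul_swap h1 h3
  calc swap a b * swap b c * swap a b = swap b a * swap c b * swap b a := by
        rw [swap_comm a b, swap_comm b c]
    _ = swap a c := L
    _ = swap c a := swap_comm a c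
    _ = swap b c * swap a b * swap b c := R.symm

/-- the permutation homomorphism -/
def permH (N : ℕ) : PosBraid N →* Equiv.Perm (Fin (N + 1)) :=
  Con.lift _ (FreeMonoid.lift fun i => Equiv.swap i.castSucc i.succ) <| by
    apply Con.conGen_le.mpr
    rintro a b (⟨i, j, hij, rfl, rfl⟩ | ⟨i, j, hij, rfl, rfl⟩) <;>
      simp only [Con.ker_rel, map_mul, FreeMonoid.lift_eval_of]
    · exact swap_comm' _ _ _ _
        (by simp [Fin.ext_iff]; omega) (by simp [Fin.ext_iff]; omega)
        (by simp [Fin.ext_iff]; omega) (by simp [Fin.ext_iff]; omega)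
    · rcases hij with hij | hij
      · have hj : j.castSucc = i.succ := by simp [Fin.ext_iff]; omega
        rw [hj]
        exact swap_braid' _ _ _
          (by simp [Fin.ext_iff]) (by simp [Fin.ext_iff]; omega) (by simp [Fin.ext_iff]; omega)
      · have hi : i.castSucc = j.succ := by simp [Fin.ext_iff]; omega
        rw [hi]
        exact (swap_braid' _ _ _
          (by simp [Fin.ext_iff]) (by simp [Fin.ext_iff]; omega)
          (by simp [Fin.ext_iff]; omega)).symm

theorem permH_sigma {N : ℕ} (i : Fin N) :
    permH N (sigma i) = Equiv.swap i.castSucc i.succ := by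
  have : permH N (sigma i) = (FreeMonoid.lift fun i : Fin N =>
      Equiv.swap i.castSucc i.succ) (.of i) := Con.lift_coe _ _
  simp [this]

theorem sigma_injective {N : ℕ} {i j : Fin N} (h : sigma i = sigma j) : i = j := by
  have h2 := congrArg (permH N) h
  rw [permH_sigma, permH_sigma] at h2
  have h3 := congrFun (congrArg (fun e : Equiv.Perm (Fin (N+1)) =>
    (e : Fin (N+1) → Fin (N+1))) h2) i.castSucc
  simp only [Equiv.swap_apply_def, Fin.ext_iff, Fin.val_succ, Fin.coe_castSucc] at h3 ⊢
  split_ifs at h3 <;>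
    (simp only [Fin.ext_iff, Fin.coe_castSucc, Fin.val_succ] at *; omega)

end Perm

section Homs

theorem sigma_comm {N : ℕ} {i j : Fin N} (h : (i : ℕ) + 2 ≤ (j : ℕ) ∨ (j : ℕ) + 2 ≤ (i : ℕ)) :
    sigma i * sigma j = sigma j * sigma i := by
  show (braidCon N).mk' (FreeMonoid.of i) * (braidCon N).mk' (FreeMonoid.of j) =
    (braidCon N).mk' (FreeMonoid.of j) * (braidCon N).mk' (FreeMonoid.of i)
  rw [← map_mul, ← map_mul]
  exact (Con.eq _).mpr (ConGen.Rel.of _ _ (Or.inl ⟨i, j, h, rfl, rfl⟩))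

theorem sigma_braid {N : ℕ} {i j : Fin N} (h : (i : ℕ) + 1 = (j : ℕ) ∨ (j : ℕ) + 1 = (i : ℕ)) :
    sigma i * sigma j * sigma i = sigma j * sigma i * sigma j := by
  show (braidCon N).mk' (FreeMonoid.of i) * (braidCon N).mk' (FreeMonoid.of j) *
      (braidCon N).mk' (FreeMonoid.of i) =
    (braidCon N).mk' (FreeMonoid.of j) * (braidCon N).mk' (FreeMonoid.of i) *
      (braidCon N).mk' (FreeMonoid.of j)
  rw [← map_mul, ← map_mul, ← map_mul, ← map_mul]
  exact (Con.eq _).mpr (ConGen.Rel.of _ _ (Or.inr ⟨i, j, h, rfl, rfl⟩))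

/-- two monoid homs agreeing on generators agree everywhere -/
theorem hom_eq_of_gen {N : ℕ} {M : Type*} [Monoid M] {f g : PosBraid N →* M}
    (h : ∀ i, f (sigma i) = g (sigma i)) : ∀ x, f x = g x := by
  intro x
  obtain ⟨L, rfl⟩ := posbraid_repr x
  induction L with
  | nil => simp
  | cons a t ih => simp only [List.map_cons, List.prod_cons, map_mul, ih, h]

theorem comm_of_gen {N : ℕ} {M : Type*} [Monoid M] {g : M} {f : PosBraid N →* M}
    (h : ∀ i, g * f (sigma i) = f (sigma i) * g) : ∀ x, g * f x = f x * g := by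
  intro x
  obtain ⟨L, rfl⟩ := posbraid_repr x
  induction L with
  | nil => simp
  | cons a t ih =>
    simp only [List.map_cons, List.prod_cons, map_mul, ← mul_assoc, h]
    rw [mul_assoc, ih, ← mul_assoc]

@[simp] theorem flipH_sigma {N : ℕ} (i : Fin N) : flipH N (sigma i) = sigma i.rev := rfl

@[simp] theorem incl_sigma {N : ℕ} (i : Fin N) : incl N (sigma i) = sigma i.castSucc := rfl

/-- the top inclusion `σ_i ↦ σ_{i+1}`. -/
def inclT (N : ℕ) : PosBraid N →* PosBraid (N + 1) :=
  Con.lift _ ((braidCon (N + 1)).mk'.comp (FreeMonoid.map Fin.succ)) <| by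
    apply Con.conGen_le.mpr
    rintro a b (⟨i, j, hij, rfl, rfl⟩ | ⟨i, j, hij, rfl, rfl⟩) <;>
      simp only [Con.ker_rel, MonoidHom.comp_apply, map_mul, FreeMonoid.map_of] <;>
      refine (Con.eq _).mpr (ConGen.Rel.of _ _ ?_)
    · exact Or.inl ⟨i.succ, j.succ, by simpa using hij, rfl, rfl⟩
    · exact Or.inr ⟨i.succ, j.succ, by simpa using hij, rfl, rfl⟩

@[simp] theorem inclT_sigma {N : ℕ} (i : Fin N) : inclT N (sigma i) = sigma i.succ := rfl

theorem flipH_flip_flip {N : ℕ} (x : PosBraid N) : flipH N (flipH N x) = x := by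
  have := hom_eq_of_gen (f := (flipH N).comp (flipH N)) (g := MonoidHom.id _)
    (fun i => by simp) x
  simpa using this

theorem flip_incl {N : ℕ} (x : PosBraid N) :
    flipH (N + 1) (incl N x) = inclT N (flipH N x) := by
  have := hom_eq_of_gen (f := (flipH (N+1)).comp (incl N)) (g := (inclT N).comp (flipH N))
    (fun i => by
      simp only [MonoidHom.comp_apply, incl_sigma, flipH_sigma, inclT_sigma]
      congr 1
      rcases i with ⟨v, hv⟩
      simp [Fin.ext_iff, Fin.rev]
      omega) x
  simpa using this

theorem len_hom {N M : ℕ} {f : PosBraid N →* PosBraid M}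
    (h : ∀ i, ∃ j, f (sigma i) = sigma j) (x : PosBraid N) : len (f x) = len x := by
  obtain ⟨L, rfl⟩ := posbraid_repr x
  induction L with
  | nil => simp
  | cons a t ih =>
    obtain ⟨j, hj⟩ := h a
    simp only [List.map_cons, List.prod_cons, map_mul, len_mul, ih, hj, len_sigma]

@[simp] theorem len_flip {N : ℕ} (x : PosBraid N) : len (flipH N x) = len x :=
  len_hom (fun i => ⟨i.rev, rfl⟩) x

@[simp] theorem len_incl {N : ℕ} (x : PosBraid N) : len (incl N x) = len x :=
  len_hom (fun i => ⟨i.castSucc, rfl⟩) x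

@[simp] theorem incl_eq_one_iff {N : ℕ} {x : PosBraid N} : incl N x = 1 ↔ x = 1 := by
  constructor
  · intro h
    have := congrArg len h
    simp only [len_incl, len_one] at this
    exact eq_one_of_len_eq_zero this
  · rintro rfl; simp

/-- the ascending chain `σ_1 σ_2 ⋯ σ_N` -/
def asc (N : ℕ) : PosBraid N := (List.ofFn sigma).prod

theorem incl_prod_ofFn {N : ℕ} :
    incl N ((List.ofFn (sigma (N := N))).prod) = (List.ofFn (fun i : Fin N => sigma i.castSucc)).prod := by
  rw [map_list_prod, List.map_ofFn]
  rfl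

theorem inclT_prod_ofFn {N : ℕ} :
    inclT N ((List.ofFn (sigma (N := N))).prod) = (List.ofFn (fun i : Fin N => sigma i.succ)).prod := by
  rw [map_list_prod, List.map_ofFn]
  rfl

theorem asc_succ_left (N : ℕ) : asc (N + 1) = sigma 0 * inclT N (asc N) := by
  rw [asc, List.ofFn_succ, List.prod_cons, asc, inclT_prod_ofFn]

theorem asc_succ_right (N : ℕ) : asc (N + 1) = incl N (asc N) * sigma (Fin.last N) := by
  rw [asc, List.ofFn_succ' , List.concat_eq_append, List.prod_append, asc, incl_prod_ofFn]
  simp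

theorem ofFn_reverse {N : ℕ} {α : Type*} (g : Fin N → α) :
    (List.ofFn g).reverse = List.ofFn (fun i => g i.rev) := by
  apply List.ext_getElem
  · simp
  · intro n h1 h2
    simp only [List.getElem_reverse, List.getElem_ofFn, List.length_ofFn] at *
    congr 1
    simp [Fin.ext_iff, Fin.rev]
    omega

theorem incl_delta {N : ℕ} :
    incl N (deltaFull N) = ((List.ofFn fun i : Fin N => sigma i.castSucc).reverse).prod := by
  rw [deltaFull, map_list_prod, List.map_reverse, List.map_ofFn]
  rfl

theorem delta_succ (N : ℕ) :
    deltaFull (N + 1) = sigma (Fin.last N) * incl N (deltaFull N) := by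
  rw [deltaFull, List.ofFn_succ', List.concat_eq_append, List.reverse_append, incl_delta]
  simp

theorem flip_delta (N : ℕ) : flipH N (deltaFull N) = asc N := by
  rw [deltaFull, map_list_prod, List.map_reverse, List.map_ofFn]
  rw [show (⇑(flipH N) ∘ sigma) = fun i : Fin N => sigma i.rev from rfl]
  rw [ofFn_reverse]
  simp [asc]

end Homs

section Chain

theorem intertwine_of_gen {N : ℕ} {M : Type*} [Monoid M] {g : M} {f1 f2 : PosBraid N →* M}
    (h : ∀ i, g * f1 (sigma i) = f2 (sigma i) * g) : ∀ x, g * f1 x = f2 x * g := by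
  intro x
  obtain ⟨L, rfl⟩ := posbraid_repr x
  induction L with
  | nil => simp
  | cons a t ih =>
    simp only [List.map_cons, List.prod_cons, map_mul]
    rw [← mul_assoc, h, mul_assoc, ih, ← mul_assoc]

theorem sigma0_comm_inclT2 {N : ℕ} (u : PosBraid N) :
    sigma (0 : Fin (N + 2)) * inclT (N + 1) (inclT N u)
      = inclT (N + 1) (inclT N u) * sigma (0 : Fin (N + 2)) := by
  have := comm_of_gen (g := sigma (0 : Fin (N+2))) (f := (inclT (N+1)).comp (inclT N))
    (fun i => by
      simp only [MonoidHom.comp_apply, inclT_sigma]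
      exact sigma_comm (Or.inl (by simp))) u
  simpa using this

theorem sigmaLast_comm_incl2 {N : ℕ} (u : PosBraid N) :
    sigma (Fin.last (N + 1)) * incl (N + 1) (incl N u)
      = incl (N + 1) (incl N u) * sigma (Fin.last (N + 1)) := by
  have := comm_of_gen (g := sigma (Fin.last (N+1))) (f := (incl (N+1)).comp (incl N))
    (fun i => by
      simp only [MonoidHom.comp_apply, incl_sigma]
      refine sigma_comm (Or.inr ?_)
      simp [Fin.last]) u
  simpa using this

theorem asc_shift_gen : ∀ (N : ℕ) (i : Fin N),
    asc (N + 1) * sigma i.castSucc = sigma i.succ * asc (N + 1) := by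
  intro N
  induction N with
  | zero => exact fun i => i.elim0
  | succ N ih =>
    rintro ⟨v, hv⟩
    match v, hv with
    | 0, hv =>
      have h1 : asc (N + 2) = sigma 0 * (sigma ⟨1, by omega⟩ * inclT (N+1) (inclT N (asc N))) := by
        rw [asc_succ_left, asc_succ_left, map_mul]
        congr 2
      have hc : Fin.castSucc (⟨0, hv⟩ : Fin (N+1)) = (0 : Fin (N+2)) := rfl
      have hs : Fin.succ (⟨0, hv⟩ : Fin (N+1)) = (⟨1, by omega⟩ : Fin (N+2)) := rfl
      rw [hc, hs, h1]
      have hT := (sigma0_comm_inclT2 (N := N) (asc N)).symm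
      calc sigma 0 * (sigma ⟨1, by omega⟩ * inclT (N+1) (inclT N (asc N))) * sigma 0
          = sigma 0 * sigma ⟨1, by omega⟩ * (inclT (N+1) (inclT N (asc N)) * sigma 0) := by
            rw [mul_assoc, mul_assoc, mul_assoc]
        _ = sigma 0 * sigma ⟨1, by omega⟩ * (sigma 0 * inclT (N+1) (inclT N (asc N))) := by
            rw [hT]
        _ = sigma 0 * sigma ⟨1, by omega⟩ * sigma 0 * inclT (N+1) (inclT N (asc N)) := by
            simp only [mul_assoc]
        _ = sigma ⟨1, by omega⟩ * sigma 0 * sigma ⟨1, by omega⟩ * inclT (N+1) (inclT N (asc N)) := by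
            rw [sigma_braid (Or.inl (by simp))]
        _ = sigma ⟨1, by omega⟩ * (sigma 0 * (sigma ⟨1, by omega⟩ * inclT (N+1) (inclT N (asc N)))) := by
            simp only [mul_assoc]
    | w + 1, hv =>
      have hw : w < N := by omega
      have ihw := ih ⟨w, hw⟩
      have hc : sigma (Fin.castSucc (⟨w+1, hv⟩ : Fin (N+1)))
          = inclT (N+1) (sigma (Fin.castSucc (⟨w, hw⟩ : Fin N))) := by
        rw [inclT_sigma]; congr 1
      have hfin : sigma (Fin.succ (⟨w, hw⟩ : Fin N)).succ
          = sigma (Fin.succ (⟨w+1, hv⟩ : Fin (N+1))) := by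
        congr 1
      calc asc (N + 2) * sigma (Fin.castSucc (⟨w+1, hv⟩ : Fin (N+1)))
          = sigma 0 * inclT (N+1) (asc (N+1)) * inclT (N+1) (sigma (Fin.castSucc (⟨w, hw⟩ : Fin N))) := by
            rw [asc_succ_left, hc]
        _ = sigma 0 * inclT (N+1) (asc (N+1) * sigma (Fin.castSucc (⟨w, hw⟩ : Fin N))) := by
            rw [mul_assoc, map_mul]
        _ = sigma 0 * inclT (N+1) (sigma (Fin.succ (⟨w, hw⟩ : Fin N)) * asc (N+1)) := by
            rw [ihw]
        _ = sigma 0 * (sigma (Fin.succ (⟨w, hw⟩ : Fin N)).succ * inclT (N+1) (asc (N+1))) := by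
            rw [map_mul, inclT_sigma]
        _ = sigma (Fin.succ (⟨w, hw⟩ : Fin N)).succ * (sigma 0 * inclT (N+1) (asc (N+1))) := by
            rw [← mul_assoc, ← mul_assoc, sigma_comm (Or.inl (by simp))]
        _ = sigma (Fin.succ (⟨w+1, hv⟩ : Fin (N+1))) * asc (N + 2) := by
            rw [hfin, asc_succ_left (N+1)]

theorem asc_shift {N : ℕ} (u : PosBraid N) :
    asc (N + 1) * incl N u = inclT N u * asc (N + 1) :=
  intertwine_of_gen (f1 := incl N) (f2 := inclT N)
    (fun i => by rw [incl_sigma, inclT_sigma]; exact asc_shift_gen N i) u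

end Chain

section ProdFlip

theorem prodFlip_nil {M : Type*} [Monoid M] (f : M → M) : prodFlip f [] = 1 := rfl

theorem prodFlip_cons {M : Type*} [Monoid M] (f : M → M) (a : M) (t : List M) :
    prodFlip f (a :: t) = f^[t.length] a * prodFlip f t := rfl

theorem prodFlip_singleton {M : Type*} [Monoid M] (f : M → M) (a : M) :
    prodFlip f [a] = a := by
  simp [prodFlip_cons, prodFlip_nil]

theorem prodFlip_append_singleton {M : Type*} [Monoid M] (f : M →* M) (s : List M) (a : M) :
    prodFlip ⇑f (s ++ [a]) = f (prodFlip ⇑f s) * a := by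
  induction s with
  | nil => simp [prodFlip_singleton, prodFlip_nil, List.nil_append, map_one]
  | cons b t ih =>
    simp only [List.cons_append, prodFlip_cons, List.length_append, List.length_cons,
      List.length_nil, ih, map_mul]
    rw [show t.length + (0 + 1) = t.length + 1 from by omega, Function.iterate_succ_apply']
    simp [mul_assoc]

theorem prodFlip_pair {M : Type*} [Monoid M] (f : M → M) (a b : M) :
    prodFlip f [a, b] = f a * b := by
  simp [prodFlip_cons, prodFlip_nil]

end ProdFlip

section EO

/-- `x` "ends only in `σ₁`" (weak form: every generator right-dividing `x` is `σ₁`). -/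
def EO {N : ℕ} (x : PosBraid N) : Prop :=
  ∀ i : Fin N, (∃ z, x = z * sigma i) → (i : ℕ) = 0

theorem EO_sigma0 {N : ℕ} : EO (sigma (⟨0, Nat.succ_pos N⟩ : Fin (N + 1))) := by
  rintro i ⟨z, hz⟩
  have hlen := congrArg len hz
  simp only [len_sigma, len_mul] at hlen
  have hz1 : z = 1 := eq_one_of_len_eq_zero (by omega)
  rw [hz1, one_mul] at hz
  have := sigma_injective hz
  simp [← this]

theorem EO_of_right {N : ℕ} {x y : PosBraid N} (h : EO x) (w : PosBraid N)
    (hw : x = w * y) : EO y := by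
  rintro i ⟨z, hz⟩
  exact h i ⟨w * z, by rw [hw, hz, mul_assoc]⟩

end EO

section SplitExist

theorem IsSplit_one_nil {k : ℕ} : IsSplit (1 : PosBraid (k+1)) ([] : List (PosBraid k)) := by
  refine ⟨rfl, by simp, ?_⟩
  intro j hj hj2
  simp only [List.length_nil] at hj2
  omega

theorem len_flip_iter {N : ℕ} (n : ℕ) (x : PosBraid N) : len ((⇑(flipH N))^[n] x) = len x := by
  induction n with
  | zero => rfl
  | succ n ih => rw [Function.iterate_succ_apply', len_flip, ih]

theorem len_prodFlip {k : ℕ} (s : List (PosBraid k)) :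
    len (prodFlip (⇑(flipH (k+1))) (s.map (incl k))) = (s.map len).sum := by
  induction s with
  | nil => simp [prodFlip_nil]
  | cons a t ih =>
    simp only [List.map_cons, prodFlip_cons, len_mul, len_flip_iter, len_incl, ih,
      List.sum_cons]

theorem IsSplit_ne_one {k : ℕ} {x : PosBraid (k+1)} {l : List (PosBraid k)}
    (h : IsSplit x l) (hl : l ≠ []) : x ≠ 1 := by
  obtain ⟨hprod, hhead, -⟩ := h
  intro hx
  rcases l with - | ⟨a, t⟩
  · exact hl rfl
  · have h1 : len x = (List.map len (a :: t)).sum := by rw [hprod, len_prodFlip]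
    rw [hx, len_one] at h1
    simp only [List.map_cons, List.sum_cons] at h1
    have : len a = 0 := by omega
    have ha : a = 1 := eq_one_of_len_eq_zero this
    exact hhead (by simp [ha])

/-- The step lemma for building splittings. -/
theorem split_step {m : ℕ} {a z : PosBraid (m+2)} {x1 : PosBraid (m+1)}
    {s' : List (PosBraid (m+1))}
    (ha : a ≠ 1) (hz : a = z * incl (m+1) x1)
    (hmax : ∀ (v : PosBraid (m+1)) (z' : PosBraid (m+2)), a = z' * incl (m+1) v →
      len v ≤ len x1)
    (hs : IsSplit (flipH (m+2) z) s') :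
    IsSplit a (s' ++ [x1]) := by
  obtain ⟨hprod, hhead, hcond⟩ := hs
  have hPs : prodFlip (⇑(flipH (m+2))) (s'.map (incl (m+1))) = flipH (m+2) z := hprod.symm
  refine ⟨?_, ?_, ?_⟩
  · rw [List.map_append, List.map_singleton, prodFlip_append_singleton, hPs, flipH_flip_flip, ← hz]
  · rcases s' with - | ⟨b, t⟩
    · simp only [List.nil_append, List.head?_cons, ne_eq, Option.some.injEq]
      intro hx1
      have hz1 : z = 1 := by
        have : flipH (m+2) z = 1 := by rw [← hPs]; rfl
        have h2 := congrArg (flipH (m+2)) this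
        rw [flipH_flip_flip, map_one] at h2
        exact h2
      rw [hz1, one_mul, hx1] at hz
      simp at hz
      exact ha hz
    · simpa using hhead
  · intro j hj1 hj2
    simp only [List.length_append, List.length_singleton] at hj2
    have hj3 : j ≤ s'.length := by omega
    rw [List.take_append_of_le_length hj3]
    rcases lt_or_eq_of_le hj3 with hlt | heq
    · exact hcond j hj1 hlt
    · subst heq
      rw [List.take_length]
      have hs'ne : s' ≠ [] := by
        intro h
        rw [h] at hj1
        simp at hj1
      -- the "only σ₁" part
      have honly : ∀ i : Fin (m + 2),
          (∃ w, prodFlip (⇑(flipH (m+2))) (s'.map (incl (m+1))) = w * sigma i) →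
          i = (⟨0, Nat.succ_pos (m+1)⟩ : Fin (m+2)) := by
        rintro i ⟨w, hw⟩
        rw [hPs] at hw
        have hzw : z = flipH (m+2) w * sigma i.rev := by
          have := congrArg (flipH (m+2)) hw
          rw [flipH_flip_flip, map_mul, flipH_sigma] at this
          exact this
        by_contra hne
        have hival : (i : ℕ) ≠ 0 := by
          intro h0
          exact hne (Fin.ext h0)
        have hrev : (i.rev : ℕ) ≤ m := by
          simp [Fin.val_rev]
          omega
        set i' : Fin (m+1) := ⟨i.rev, by omega⟩ with hi'
        have hcast : (i' : Fin (m+1)).castSucc = i.rev := by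
          simp [Fin.ext_iff, hi']
        have hdiv : a = flipH (m+2) w * incl (m+1) (sigma i' * x1) := by
          rw [map_mul, incl_sigma, hcast, hz, hzw]
          simp [mul_assoc]
        have := hmax (sigma i' * x1) _ hdiv
        simp at this
      refine ⟨?_, honly⟩
      -- existence of σ₁ divisor
      have hbne : flipH (m+2) z ≠ 1 := by
        intro h1
        have : z = 1 := by
          have h2 := congrArg (flipH (m+2)) h1
          rw [flipH_flip_flip, map_one] at h2
          exact h2
        apply IsSplit_ne_one ⟨hprod, hhead, hcond⟩ hs'ne
        rw [this, map_one]
      obtain ⟨i, w, hiw⟩ := exists_last_letter hbne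
      have hi0 := honly i ⟨w, by rw [hPs]; exact hiw⟩
      exact ⟨w, by rw [hPs, hiw, hi0]⟩

/-- Existence of splittings. -/
theorem exists_split (m : ℕ) (a : PosBraid (m+2)) : ∃ l, IsSplit a l := by
  suffices H : ∀ n (a : PosBraid (m+2)), len a ≤ n → ∃ l, IsSplit a l from
    H (len a) a le_rfl
  intro n
  induction n using Nat.strong_induction_on with
  | _ n IH =>
    intro a hlen
    by_cases ha : a = 1
    · exact ⟨[], ha ▸ IsSplit_one_nil⟩
    have hn1 : 1 ≤ len a := by
      rcases Nat.eq_zero_or_pos (len a) with h | h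
      · exact absurd (eq_one_of_len_eq_zero h) ha
      · exact h
    -- the set of lengths of right divisors of `a` lying in the image of `incl`
    have hgen : ∀ (b : PosBraid (m+2)), b ≠ 1 → ∃ (x1 : PosBraid (m+1)) (z : PosBraid (m+2)),
        b = z * incl (m+1) x1 ∧
        (∀ (v : PosBraid (m+1)) (z' : PosBraid (m+2)), b = z' * incl (m+1) v →
          len v ≤ len x1) := by
      intro b hb
      set S : Set ℕ := {d | ∃ (v : PosBraid (m+1)) (z : PosBraid (m+2)),
        b = z * incl (m+1) v ∧ len v = d} with hS
      have hSne : S.Nonempty := ⟨0, 1, b, by simp, len_one⟩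
      have hSbdd : BddAbove S := by
        refine ⟨len b, ?_⟩
        rintro d ⟨v, z, hvz, rfl⟩
        have := congrArg len hvz
        simp only [len_mul, len_incl] at this
        omega
      obtain ⟨v, z, hvz, hvlen⟩ := Nat.sSup_mem hSne hSbdd
      refine ⟨v, z, hvz, ?_⟩
      intro v' z' h'
      rw [hvlen]
      exact le_csSup hSbdd ⟨v', z', h', rfl⟩
    obtain ⟨x1, z, hzx, hmax⟩ := hgen a ha
    by_cases hx1 : x1 = 1
    · -- degenerate case : the maximal divisor is trivial; work with `Φ a`
      subst hx1
      have hmax0 : ∀ (v : PosBraid (m+1)) (z' : PosBraid (m+2)),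
          a = z' * incl (m+1) v → len v = 0 := by
        intro v z' h'
        have := hmax v z' h'
        simpa using this
      -- the only generator dividing `a` is the top one
      obtain ⟨i, w, hwa⟩ := exists_last_letter ha
      have hitop : (i : ℕ) = m + 1 := by
        by_contra hne
        have hi : (i : ℕ) ≤ m := by omega
        set i' : Fin (m+1) := ⟨i, by omega⟩ with hi'
        have hcast : (i' : Fin (m+1)).castSucc = i := by simp [Fin.ext_iff, hi']
        have := hmax0 (sigma i') w (by rw [incl_sigma, hcast]; exact hwa)
        simp at this
      -- `Φ a` has `σ₁` as a right divisor
      set b := flipH (m+2) a with hbdef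
      have hba : b = flipH (m+2) w * sigma i.rev := by
        rw [hbdef, hwa, map_mul, flipH_sigma]
      have hrev0 : i.rev = (⟨0, by omega⟩ : Fin (m+2)) := by
        simp [Fin.ext_iff, Fin.val_rev]
        omega
      have hbne : b ≠ 1 := by
        intro h1
        apply ha
        have := congrArg (flipH (m+2)) h1
        rw [hbdef, flipH_flip_flip, map_one] at this
        exact this
      obtain ⟨x1', z', hbz', hmax'⟩ := hgen b hbne
      have hx1' : 1 ≤ len x1' := by
        have : b = flipH (m+2) w * incl (m+1) (sigma (⟨0, Nat.succ_pos m⟩ : Fin (m+1))) := by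
          rw [hba, hrev0, incl_sigma]
          rfl
        have h2 := hmax' _ _ this
        simpa using h2
      have hlenz' : len (flipH (m+2) z') < n := by
        have := congrArg len hbz'
        simp only [len_mul, len_incl] at this
        have hlb : len b = len a := by rw [hbdef, len_flip]
        rw [len_flip]
        omega
      obtain ⟨s'', hs''⟩ := IH (len (flipH (m+2) z')) hlenz' (flipH (m+2) z') le_rfl
      have hsb : IsSplit b (s'' ++ [x1']) := split_step hbne hbz' hmax' hs''
      refine ⟨(s'' ++ [x1']) ++ [1], ?_⟩
      apply split_step ha (z := a) (x1 := 1) (by simp)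
        (fun v z' h' => by simp [hmax0 v z' h'])
      exact hsb
    · -- main case
      have hlx : 1 ≤ len x1 := by
        rcases Nat.eq_zero_or_pos (len x1) with h | h
        · exact absurd (eq_one_of_len_eq_zero h) hx1
        · exact h
      have hlenz : len (flipH (m+2) z) < n := by
        have := congrArg len hzx
        simp only [len_mul, len_incl] at this
        rw [len_flip]
        omega
      obtain ⟨s', hs'⟩ := IH (len (flipH (m+2) z)) hlenz (flipH (m+2) z) le_rfl
      exact ⟨s' ++ [x1], split_step ha hzx hmax hs'⟩

end SplitExist

section SmallRank

theorem posbraid0_eq_one (x : PosBraid 0) : x = 1 := by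
  obtain ⟨L, rfl⟩ := posbraid_repr x
  have : L = [] := by
    cases L with
    | nil => rfl
    | cons a _ => exact a.elim0
  simp [this]

theorem posbraid1_aux (L : List (Fin 1)) : (L.map sigma).prod = sigma 0 ^ L.length := by
  induction L with
  | nil => simp
  | cons a t ih =>
    have ha : a = 0 := Subsingleton.elim _ _
    rw [ha]
    simp only [List.map_cons, List.prod_cons, List.length_cons, ih]
    rw [← pow_succ']

theorem posbraid1_pow (x : PosBraid 1) : x = sigma 0 ^ len x := by
  obtain ⟨L, rfl⟩ := posbraid_repr x
  rw [len_prod]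
  exact posbraid1_aux L

@[simp] theorem len_pow_sigma {N : ℕ} (i : Fin N) (p : ℕ) : len (sigma i ^ p) = p := by
  induction p with
  | zero => simp
  | succ p ih => rw [pow_succ, len_mul, ih, len_sigma]

theorem ordP1_iff {x y : PosBraid 1} : ordP 1 x y ↔ len x < len y := by
  constructor
  · rintro ⟨p, q, rfl, rfl, h⟩
    simpa using h
  · intro h
    exact ⟨len x, len y, posbraid1_pow x, posbraid1_pow y, h⟩

end SmallRank

section ConcreteSplits

theorem IsSplit_incl {k : ℕ} (v : PosBraid k) (hv : v ≠ 1) : IsSplit (incl k v) [v] := by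
  refine ⟨(prodFlip_singleton _ _).symm, by simp [hv], ?_⟩
  intro j hj1 hj2
  simp only [List.length_singleton] at hj2
  omega

theorem sigma0_eq_incl {k : ℕ} :
    (sigma (⟨0, Nat.succ_pos (k+1)⟩ : Fin (k+2)) : PosBraid (k+2))
      = incl (k+1) (sigma (⟨0, Nat.succ_pos k⟩ : Fin (k+1))) := by
  rw [incl_sigma]
  rfl

theorem flip_sigma0 {k : ℕ} :
    flipH (k+2) (sigma (⟨0, Nat.succ_pos (k+1)⟩ : Fin (k+2))) = sigma (Fin.last (k+1)) := by
  rw [flipH_sigma]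
  congr 1

theorem IsSplit_top {k : ℕ} (u : PosBraid (k+1)) :
    IsSplit (sigma (Fin.last (k+1)) * incl (k+1) u)
      [sigma (⟨0, Nat.succ_pos k⟩ : Fin (k+1)), u] := by
  refine ⟨?_, by simp [sigma_ne_one], ?_⟩
  · rw [List.map_cons, List.map_cons, List.map_nil, prodFlip_pair, ← sigma0_eq_incl,
      flip_sigma0]
  · intro j hj1 hj2
    simp only [List.length_cons, List.length_nil] at hj2
    have hj : j = 1 := by omega
    subst hj
    have htake : ([sigma (⟨0, Nat.succ_pos k⟩ : Fin (k+1)), u].take 1) =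
        [sigma (⟨0, Nat.succ_pos k⟩ : Fin (k+1))] := rfl
    rw [htake, List.map_singleton, prodFlip_singleton, ← sigma0_eq_incl]
    constructor
    · exact ⟨1, (one_mul _).symm⟩
    · intro i hi
      exact Fin.ext (EO_sigma0 i hi)

theorem IsSplit_delta {k : ℕ} :
    IsSplit (deltaFull (k+2)) [sigma (⟨0, Nat.succ_pos k⟩ : Fin (k+1)), deltaFull (k+1)] := by
  rw [delta_succ]
  exact IsSplit_top _

theorem IsSplit_delta_sigma {k : ℕ} :
    IsSplit (deltaFull (k+2) * sigma (⟨0, Nat.succ_pos (k+1)⟩ : Fin (k+2)))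
      [sigma (⟨0, Nat.succ_pos k⟩ : Fin (k+1)),
        deltaFull (k+1) * sigma (⟨0, Nat.succ_pos k⟩ : Fin (k+1))] := by
  have h : deltaFull (k+2) * sigma (⟨0, Nat.succ_pos (k+1)⟩ : Fin (k+2))
      = sigma (Fin.last (k+1)) * incl (k+1)
        (deltaFull (k+1) * sigma (⟨0, Nat.succ_pos k⟩ : Fin (k+1))) := by
    rw [delta_succ, map_mul, ← sigma0_eq_incl, mul_assoc]
  rw [h]
  exact IsSplit_top _

theorem ordP_intro {k : ℕ} {x y : PosBraid (k+2)} (lx ly : List (PosBraid (k+1)))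
    (hx : IsSplit x lx) (hy : IsSplit y ly) (h : SL (ordP (k+1)) lx ly) :
    ordP (k+2) x y := ⟨lx, ly, hx, hy, h⟩

end ConcreteSplits

section Minimality

/-- `σ₁` is minimal among nontrivial elements. -/
theorem sigma_min : ∀ (m : ℕ) (c : PosBraid (m+1)), c ≠ 1 →
    geP (m+1) c (sigma (⟨0, Nat.succ_pos m⟩ : Fin (m+1))) := by
  intro m
  induction m with
  | zero =>
    intro c hc
    have hp := posbraid1_pow c
    have hl : 1 ≤ len c := by
      rcases Nat.eq_zero_or_pos (len c) with h | h
      · exact absurd (eq_one_of_len_eq_zero h) hc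
      · exact h
    rcases eq_or_lt_of_le hl with h1 | h1
    · left
      rw [hp, ← h1, pow_one]
      rfl
    · right
      exact ⟨1, len c, by rw [pow_one]; rfl, hp, h1⟩
  | succ m ih =>
    intro c hc
    obtain ⟨lc, hlc⟩ := exists_split m c
    have hσ : (sigma (⟨0, Nat.succ_pos (m+1)⟩ : Fin (m+2)) : PosBraid (m+2))
        = incl (m+1) (sigma (⟨0, Nat.succ_pos m⟩ : Fin (m+1))) := sigma0_eq_incl
    have hσsplit : IsSplit (sigma (⟨0, Nat.succ_pos (m+1)⟩ : Fin (m+2)) : PosBraid (m+2))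
        [sigma (⟨0, Nat.succ_pos m⟩ : Fin (m+1))] := by
      rw [hσ]
      exact IsSplit_incl _ (sigma_ne_one _)
    match lc, hlc with
    | [], hlc =>
      exact absurd hlc.1 hc
    | [v], hlc =>
      have hcv : c = incl (m+1) v := by
        have := hlc.1
        rwa [List.map_singleton, prodFlip_singleton] at this
      have hv : v ≠ 1 := by
        intro h
        exact hlc.2.1 (by simp [h])
      rcases ih v hv with h | h
      · left
        rw [hcv, h, ← hσ]
      · right
        refine ordP_intro [sigma (⟨0, Nat.succ_pos m⟩ : Fin (m+1))] [v] hσsplit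
          (hcv ▸ IsSplit_incl v hv) ?_
        exact Or.inr ⟨rfl, List.Lex.rel h⟩
    | v :: w :: t, hlc =>
      right
      refine ordP_intro _ _ hσsplit hlc ?_
      left
      simp only [List.length_singleton, List.length_cons, List.length_nil]
      omega

end Minimality

section MainLemma

theorem deltaFull_zero : deltaFull 0 = 1 := rfl

theorem fin_zero_mk (N : ℕ) : (0 : Fin (N+1)) = ⟨0, Nat.succ_pos N⟩ := rfl

theorem deltaFull_one : deltaFull 1 = sigma (⟨0, Nat.succ_pos 0⟩ : Fin 1) := by
  have h := delta_succ 0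
  rw [deltaFull_zero, map_one, mul_one] at h
  rw [h]
  rfl

/-- The key structural lemma : a nontrivial element that ends only in `σ₁` and is not in
the image of `incl` is `≥ δ`, and moreover `≥ δσ₁` unless it equals `δ`. -/
theorem main_L : ∀ (m : ℕ) (c : PosBraid (m+1)), c ≠ 1 → EO c →
    (∀ v : PosBraid m, c ≠ incl m v) →
    geP (m+1) c (deltaFull (m+1)) ∧
    (c = deltaFull (m+1) ∨
      geP (m+1) c (deltaFull (m+1) * sigma (⟨0, Nat.succ_pos m⟩ : Fin (m+1)))) := by
  intro m
  induction m with
  | zero =>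
    intro c hc hEO hNS
    have hp := posbraid1_pow c
    have hl : 1 ≤ len c := by
      rcases Nat.eq_zero_or_pos (len c) with h | h
      · exact absurd (eq_one_of_len_eq_zero h) hc
      · exact h
    rw [deltaFull_one]
    constructor
    · exact sigma_min 0 c hc
    · rcases eq_or_lt_of_le hl with h1 | h1
      · left
        rw [hp, ← h1, pow_one, fin_zero_mk]
      · right
        have h2 : (2 : ℕ) ≤ len c := h1
        rcases eq_or_lt_of_le h2 with h3 | h3
        · left
          rw [hp, ← h3, sq, fin_zero_mk]
        · right
          refine ⟨2, len c, ?_, hp, h3⟩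
          rw [sq, fin_zero_mk]
  | succ m ih =>
    intro c hc hEO hNS
    obtain ⟨lc, hlc⟩ := exists_split m c
    have hδs : IsSplit (deltaFull (m+2))
        [sigma (⟨0, Nat.succ_pos m⟩ : Fin (m+1)), deltaFull (m+1)] := IsSplit_delta
    have hδσs : IsSplit (deltaFull (m+2) * sigma (⟨0, Nat.succ_pos (m+1)⟩ : Fin (m+2)))
        [sigma (⟨0, Nat.succ_pos m⟩ : Fin (m+1)),
          deltaFull (m+1) * sigma (⟨0, Nat.succ_pos m⟩ : Fin (m+1))] := IsSplit_delta_sigma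
    match lc, hlc with
    | [], hlc =>
      exact absurd (by simpa [prodFlip_nil] using hlc.1) hc
    | [v], hlc =>
      have hcv : c = incl (m+1) v := by
        have := hlc.1
        rwa [List.map_singleton, prodFlip_singleton] at this
      exact absurd hcv (hNS v)
    | v :: w :: u :: t, hlc =>
      constructor
      · right
        refine ordP_intro _ _ hδs hlc (Or.inl ?_)
        simp only [List.length_cons, List.length_nil, List.length_singleton]
        omega
      · right; right
        refine ordP_intro _ _ hδσs hlc (Or.inl ?_)
        simp only [List.length_cons, List.length_nil, List.length_singleton]
        omega
    | [y2, y1], hlc =>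
      have hprod : c = flipH (m+2) (incl (m+1) y2) * incl (m+1) y1 := by
        have := hlc.1
        rwa [List.map_cons, List.map_cons, List.map_nil, prodFlip_pair] at this
      have hy2ne : y2 ≠ 1 := fun h => hlc.2.1 (by simp [h])
      by_cases hy2 : y2 = sigma (⟨0, Nat.succ_pos m⟩ : Fin (m+1))
      · -- descend to `y1`
        have hc2 : c = sigma (Fin.last (m+1)) * incl (m+1) y1 := by
          rw [hprod, hy2, ← sigma0_eq_incl, flip_sigma0]
        have hlastne : ((Fin.last (m+1) : Fin (m+2)) : ℕ) ≠ 0 := by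
          simp [Fin.last]
        have hy1ne : y1 ≠ 1 := by
          intro h
          exact hlastne (hEO (Fin.last (m+1)) ⟨1, by rw [hc2, h]; simp⟩)
        have hy1EO : EO y1 := by
          rintro i ⟨w, hw⟩
          have h2 := hEO i.castSucc ⟨sigma (Fin.last (m+1)) * incl (m+1) w, by
            rw [hc2, hw, map_mul, incl_sigma, mul_assoc]⟩
          simpa using h2
        have hy1NS : ∀ v : PosBraid m, y1 ≠ incl m v := by
          intro v hv
          apply hlastne
          refine hEO (Fin.last (m+1)) ⟨incl (m+1) (incl m v), ?_⟩
          rw [hc2, hv, sigmaLast_comm_incl2]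
        obtain ⟨hge1, hge2⟩ := ih y1 hy1ne hy1EO hy1NS
        have hcsplit : IsSplit c [sigma (⟨0, Nat.succ_pos m⟩ : Fin (m+1)), y1] := by
          rw [hc2]
          exact IsSplit_top y1
        constructor
        · rcases hge1 with h | h
          · left
            rw [hc2, h, ← delta_succ]
          · right
            refine ordP_intro _ _ hδs hcsplit (Or.inr ⟨rfl, ?_⟩)
            exact List.Lex.cons (List.Lex.rel h)
        · rcases hge2 with h2 | h2
          · left
            rw [hc2, h2, ← delta_succ]
          · rcases h2 with h2 | h2
            · right; left
              rw [hc2, h2, map_mul, ← sigma0_eq_incl, ← mul_assoc, ← delta_succ]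
            · right; right
              refine ordP_intro _ _ hδσs hcsplit (Or.inr ⟨rfl, ?_⟩)
              exact List.Lex.cons (List.Lex.rel h2)
      · -- `y2 ≠ σ₁` : strict comparison in the first entry
        have hmin := sigma_min m y2 hy2ne
        rcases hmin with h | h
        · exact absurd h hy2
        · constructor
          · right
            exact ordP_intro _ _ hδs hlc (Or.inr ⟨rfl, List.Lex.rel h⟩)
          · right; right
            exact ordP_intro _ _ hδσs hlc (Or.inr ⟨rfl, List.Lex.rel h⟩)

/-- The exclusion of `x_r = δ` for middle entries. -/
theorem crux {m : ℕ} {Z W z : PosBraid (m+2)} {u : PosBraid (m+1)}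
    (hZ : Z = z * sigma (⟨0, Nat.succ_pos (m+1)⟩ : Fin (m+2)))
    (hW : W = flipH (m+2) (flipH (m+2) Z * incl (m+1) (deltaFull (m+1))) * incl (m+1) u) :
    ¬ EO W := by
  intro hEO
  have h1 : flipH (m+2) (flipH (m+2) Z * incl (m+1) (deltaFull (m+1)))
      = Z * inclT (m+1) (asc (m+1)) := by
    rw [map_mul, flipH_flip_flip, flip_incl, flip_delta]
  have h2 : W = z * asc (m+2) * incl (m+1) u := by
    rw [hW, h1, hZ]
    rw [mul_assoc z _ _]
    congr 2
    rw [asc_succ_left (m+1), fin_zero_mk]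
  have h3 : W = z * inclT (m+1) u * asc (m+2) := by
    rw [h2, mul_assoc, asc_shift, ← mul_assoc]
  have h4 : W = (z * inclT (m+1) u * incl (m+1) (asc (m+1))) * sigma (Fin.last (m+1)) := by
    rw [h3, asc_succ_right, ← mul_assoc]
  have h5 := hEO (Fin.last (m+1)) ⟨_, h4⟩
  simp [Fin.last] at h5

end MainLemma

section Assembly

theorem prodFlip_take_succ {m : ℕ} (l : List (PosBraid (m+1))) (j : ℕ) (hj : j < l.length) :
    prodFlip (⇑(flipH (m+2))) ((l.take (j+1)).map (incl (m+1)))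
      = flipH (m+2) (prodFlip (⇑(flipH (m+2))) ((l.take j).map (incl (m+1))))
        * incl (m+1) (l[j]'hj) := by
  rw [List.take_succ, List.getElem?_eq_getElem hj]
  rw [show (some (l[j]'hj)).toList = [l[j]'hj] from rfl]
  rw [List.map_append, List.map_singleton, prodFlip_append_singleton]

/-- Derivation of the hypotheses of `main_L` for an entry of a splitting. -/
theorem entry_ge {m : ℕ} {l : List (PosBraid (m+1))} {i : ℕ} (hi : i < l.length)
    (z : PosBraid (m+2))
    (hz : prodFlip (⇑(flipH (m+2))) ((l.take i).map (incl (m+1)))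
      = z * sigma (⟨0, Nat.succ_pos (m+1)⟩ : Fin (m+2)))
    (hYonly : ∀ i' : Fin (m+2),
      (∃ w, prodFlip (⇑(flipH (m+2))) ((l.take (i+1)).map (incl (m+1))) = w * sigma i') →
      i' = (⟨0, Nat.succ_pos (m+1)⟩ : Fin (m+2))) :
    geP (m+1) (l[i]'hi) (deltaFull (m+1)) ∧
    (l[i]'hi = deltaFull (m+1) ∨
      geP (m+1) (l[i]'hi) (deltaFull (m+1) * sigma (⟨0, Nat.succ_pos m⟩ : Fin (m+1)))) := by
  have hY := prodFlip_take_succ l i hi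
  have hEOY : EO (prodFlip (⇑(flipH (m+2))) ((l.take (i+1)).map (incl (m+1)))) :=
    fun i' h => by rw [hYonly i' h]
  have hZσ : flipH (m+2) (prodFlip (⇑(flipH (m+2))) ((l.take i).map (incl (m+1))))
      = flipH (m+2) z * sigma (Fin.last (m+1)) := by
    rw [hz, map_mul, flip_sigma0]
  have hlastne : ((Fin.last (m+1) : Fin (m+2)) : ℕ) ≠ 0 := by simp [Fin.last]
  have hcne : l[i]'hi ≠ 1 := by
    intro h
    apply hlastne
    apply hEOY (Fin.last (m+1))
    exact ⟨flipH (m+2) z, by rw [hY, h, map_one, mul_one, hZσ]⟩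
  have hEOc : EO (l[i]'hi) := by
    rintro i' ⟨w, hw⟩
    have h2 := hEOY i'.castSucc
      ⟨flipH (m+2) (prodFlip (⇑(flipH (m+2))) ((l.take i).map (incl (m+1)))) * incl (m+1) w, by
        rw [hY, hw, map_mul, incl_sigma, mul_assoc]⟩
    simpa using h2
  have hNS : ∀ v : PosBraid m, l[i]'hi ≠ incl m v := by
    intro v hv
    apply hlastne
    apply hEOY (Fin.last (m+1))
    refine ⟨flipH (m+2) z * incl (m+1) (incl m v), ?_⟩
    rw [hY, hv, hZσ, mul_assoc, sigmaLast_comm_incl2, ← mul_assoc]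
  exact main_L m _ hcne hEOc hNS

end Assembly

/-- in `B_n⁺` (`n = k+2 ≥ 2`), if `(x_p, …, x_1)` is the `n`-splitting of
some positive braid, then `x_p ≥⁺ σ_1`, `x_r ≥⁺ δ_{n-1}σ_1` for `p > r ≥ 3`, and
`x_2 ≥⁺ δ_{n-1}` whenever `p ≥ 3` (here `δ_{n-1} = σ_{n-2} ⋯ σ_1`). -/
theorem splitting_constraints (k : ℕ) (x : PosBraid (k + 1))
    (l : List (PosBraid k)) (hl : IsSplit x l) :
    (∀ h0 : 0 < l.length, geP k (l[0]'h0) (sigmaP k 0)) ∧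
    (∀ (i : ℕ) (hi : i < l.length), 1 ≤ i → i + 3 ≤ l.length →
      geP k (l[i]'hi) (deltaFull k * sigmaP k 0)) ∧
    (∀ (i : ℕ) (hi : i < l.length), 3 ≤ l.length → i + 2 = l.length →
      geP k (l[i]'hi) (deltaFull k)) := by
  obtain ⟨hxprod, hhead, hcond⟩ := hl
  rcases k with - | m
  · exact ⟨fun _ => Or.inl ((posbraid0_eq_one _).trans (posbraid0_eq_one _).symm),
      fun _ _ _ _ => Or.inl ((posbraid0_eq_one _).trans (posbraid0_eq_one _).symm),
      fun _ _ _ _ => Or.inl ((posbraid0_eq_one _).trans (posbraid0_eq_one _).symm)⟩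
  have hsig : sigmaP (m+1) 0 = sigma (⟨0, Nat.succ_pos m⟩ : Fin (m+1)) := by
    rw [sigmaP, dif_pos (Nat.succ_pos m)]
  refine ⟨?_, ?_, ?_⟩
  · -- part 1 : the head entry is `≥ σ₁`
    intro h0
    have hne : l[0]'h0 ≠ 1 := by
      intro h
      apply hhead
      have h1 : l.head? = some (l[0]'h0) := by
        rw [List.head?_eq_getElem?, List.getElem?_eq_getElem h0]
      rw [h1, h]
    rw [hsig]
    exact sigma_min m _ hne
  · -- part 2 : middle entries are `≥ δσ₁`
    intro i hi h1i h3i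
    obtain ⟨⟨z, hz⟩, -⟩ := hcond i h1i (by omega)
    obtain ⟨-, hYonly⟩ := hcond (i+1) (by omega) (by omega)
    obtain ⟨-, hWonly⟩ := hcond (i+2) (by omega) (by omega)
    obtain ⟨-, h2⟩ := entry_ge hi z hz hYonly
    rcases h2 with hceq | hge
    · -- excluded by the condition one step further
      exfalso
      have hEOW : EO (prodFlip (⇑(flipH (m+2))) ((l.take (i+2)).map (incl (m+1)))) :=
        fun i' h => by rw [hWonly i' h]
      have hY := prodFlip_take_succ l i (by omega)
      have hW := prodFlip_take_succ l (i+1) (by omega)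
      rw [show i+1+1 = i+2 from rfl] at hW
      exact crux hz (by rw [hW, hY, hceq]) hEOW
    · rw [hsig]
      exact hge
  · -- part 3 : the second entry is `≥ δ`
    intro i hi h3 h2i
    have h1i : 1 ≤ i := by omega
    obtain ⟨⟨z, hz⟩, -⟩ := hcond i h1i (by omega)
    obtain ⟨-, hYonly⟩ := hcond (i+1) (by omega) (by omega)
    obtain ⟨h1, -⟩ := entry_ge hi z hz hYonly
    exact h1
end
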